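/- arXiv:2306.04264 — 5 statements merged into one kernel-verified Lean document; each statement's English description precedes it below -/
import Mathlib

section
/- Let r^1,...,r^k ∈ Z^n be linearly independent and z ∈ pos{r^1,...,r^k} ∩ Z^n. Then z can be written as a non-negative integral combination of elements of par{r^1,...,r^k} ∪ {r^1,...,r^k}. -/
open scoped BigOperators

noncomputable section

namespace ICRPaper

/-- A real vector is integral if every coordinate is an integer. -/
def IsIntegral {n : ℕ} (x : Fin n → ℝ) : Prop := ∀ i, ∃ z : ℤ, x i = (z : ℝ)

/-- The lattice of integer points of `ℝ^n`. -/
def intLattice (n : ℕ) : Set (Fin n → ℝ) := {x | IsIntegral x}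

/-- Standard dot product on `ℝ^n`. -/
def dot {n : ℕ} (x y : Fin n → ℝ) : ℝ := ∑ i, x i * y i

/-- `pos r`: the cone of non-negative real combinations of the vectors `r i`. -/
def pos {n : ℕ} {ι : Type} [Fintype ι] (r : ι → (Fin n → ℝ)) : Set (Fin n → ℝ) :=
  {x | ∃ lam : ι → ℝ, (∀ i, 0 ≤ lam i) ∧ x = ∑ i, lam i • r i}

/-- Lattice points (w.r.t. a lattice `Λ`) in the half-open parallelepiped spanned by `r`. -/
def parL {n : ℕ} {ι : Type} [Fintype ι] (Λ : Set (Fin n → ℝ)) (r : ι → (Fin n → ℝ)) :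
    Set (Fin n → ℝ) :=
  {x | (∃ lam : ι → ℝ, (∀ i, 0 ≤ lam i ∧ lam i < 1) ∧ x = ∑ i, lam i • r i) ∧ x ∈ Λ}

/-- Integer points in the half-open parallelepiped spanned by `r`. -/
def par {n : ℕ} {ι : Type} [Fintype ι] (r : ι → (Fin n → ℝ)) : Set (Fin n → ℝ) :=
  parL (intLattice n) r

/-- `h` is a Hilbert basis element of the cone `C` with respect to the lattice `Λ`:
a nonzero lattice vector of `C` which is not the sum of two nonzero lattice vectors of `C`. -/
def IsHilbertL {n : ℕ} (Λ : Set (Fin n → ℝ)) (C : Set (Fin n → ℝ)) (h : Fin n → ℝ) : Prop :=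
  h ∈ C ∧ h ∈ Λ ∧ h ≠ 0 ∧
    ∀ a b : Fin n → ℝ, a ∈ C → b ∈ C → a ∈ Λ → b ∈ Λ → a ≠ 0 → b ≠ 0 → h ≠ a + b

/-- The integer Carathéodory rank of `C` with respect to the lattice `Λ`:
the maximum over lattice points `z ∈ C` of the minimal number of Hilbert basis
elements needed to write `z` as a non-negative integral combination. -/
def ICRL {n : ℕ} (Λ : Set (Fin n → ℝ)) (C : Set (Fin n → ℝ)) : ℕ :=
  sSup {m : ℕ | ∃ z ∈ C, z ∈ Λ ∧
    m = sInf {k : ℕ | ∃ h : Fin k → (Fin n → ℝ), ∃ c : Fin k → ℕ,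
      (∀ i, IsHilbertL Λ C (h i)) ∧ z = ∑ i, (c i : ℝ) • h i}}

/-- The integer Carathéodory rank with respect to the integer lattice `ℤ^n`. -/
def ICR {n : ℕ} (C : Set (Fin n → ℝ)) : ℕ := ICRL (intLattice n) C

/-- The lattice `L ∩ ℤ^n`, where `L` is the real span of the vectors `r i`. -/
def latticeOf {n : ℕ} {ι : Type} [Fintype ι] (r : ι → (Fin n → ℝ)) : Set (Fin n → ℝ) :=
  {x | x ∈ Submodule.span ℝ (Set.range r) ∧ IsIntegral x}

/-- The dual lattice `Λ* = {x ∈ lin Λ : ⟨y, x⟩ ∈ ℤ for all y ∈ Λ}`. -/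
def dualLattice {n : ℕ} (Λ : Set (Fin n → ℝ)) : Set (Fin n → ℝ) :=
  {x | x ∈ Submodule.span ℝ Λ ∧ ∀ y ∈ Λ, ∃ m : ℤ, dot y x = (m : ℝ)}

/-- Orthogonal projection onto the orthogonal complement of `v`. -/
def projPerp {n : ℕ} (v : Fin n → ℝ) (x : Fin n → ℝ) : Fin n → ℝ :=
  x - (dot x v / dot v v) • v

/-- every integer point of a simplicial cone is a non-negative integral
combination of elements of `par r ∪ {r^1, ..., r^k}`. -/
theorem stmt_1 {n k : ℕ} (r : Fin k → (Fin n → ℝ))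
    (hint : ∀ i, IsIntegral (r i)) (hli : LinearIndependent ℝ r)
    (z : Fin n → ℝ) (hz : z ∈ pos r) (hzint : IsIntegral z) :
    ∃ (m : ℕ) (y : Fin m → (Fin n → ℝ)) (c : Fin m → ℕ),
      (∀ i, y i ∈ par r ∪ Set.range r) ∧ z = ∑ i, (c i : ℝ) • y i := by
  obtain ⟨lam, hlam, hzeq⟩ := hz
  set w : Fin n → ℝ := ∑ i, Int.fract (lam i) • r i with hw
  have hkey : z = w + ∑ j, (⌊lam j⌋ : ℝ) • r j := by
    rw [hzeq, hw, ← Finset.sum_add_distrib]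
    refine Finset.sum_congr rfl fun j _ => ?_
    rw [← add_smul, Int.fract_add_floor]
  have hwpar : w ∈ par r := by
    refine ⟨⟨fun i => Int.fract (lam i),
      fun i => ⟨Int.fract_nonneg _, Int.fract_lt_one _⟩, rfl⟩, ?_⟩
    intro i0
    obtain ⟨a, ha⟩ := hzint i0
    choose b hb using fun j => hint j i0
    refine ⟨a - ∑ j, ⌊lam j⌋ * b j, ?_⟩
    have : w i0 = z i0 - ∑ j, (⌊lam j⌋ : ℝ) * r j i0 := by
      rw [hkey]; simp [Finset.sum_apply]
    rw [this, ha]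
    push_cast
    congr 1
    exact Finset.sum_congr rfl fun j _ => by rw [hb j]
  refine ⟨k + 1, Fin.cons w r, Fin.cons 1 (fun i => (⌊lam i⌋).toNat), ?_, ?_⟩
  · intro i
    refine Fin.cases (Or.inl hwpar) (fun j => Or.inr ⟨j, rfl⟩) i
  · rw [Fin.sum_univ_succ]
    simp only [Fin.cons_succ, Fin.cons_zero, Nat.cast_one, one_smul]
    rw [hkey]
    congr 1
    refine Finset.sum_congr rfl fun j _ => ?_
    congr 1
    have h0 : (0 : ℤ) ≤ ⌊lam j⌋ := Int.floor_nonneg.mpr (hlam j)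
    rw [← Int.toNat_of_nonneg h0]
    push_cast
    rw [Int.toNat_of_nonneg h0]

end ICRPaper
end
end

section
/- Let r^1,...,r^k ∈ Z^n be linearly independent, L = span{r^1,...,r^k}, and let (r^1)*,...,(r^k)* ∈ L be the dual basis (i.e., ⟨r^i, (r^j)*⟩ = δ_{ij}). For i ≠ j, the vector (r^i)* − (r^j)* lies in the dual lattice (L ∩ Z^n)* if and only if every y ∈ par{r^1,...,r^k} with y = Σ_l λ_l r^l satisfies λ_i = λ_j. -/
open scoped BigOperators

noncomputable section

namespace ICRPaper

/-! Pairing `∑ μ_l r^l` with `(r^i)* − (r^j)*` gives `μ_i − μ_j`. Reducing the coefficients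
modulo `1` maps every point of `L ∩ ℤ^n` to a point of `par`, and `μ_i − μ_j ∈ ℤ` exactly when
`fract μ_i = fract μ_j`, which for coefficients in `[0, 1)` means `μ_i = μ_j`. -/

section

variable {n : ℕ} {ι : Type*} [Fintype ι]

lemma dot_sub_right (x a b : Fin n → ℝ) : dot x (a - b) = dot x a - dot x b := by
  simp [dot, mul_sub, Finset.sum_sub_distrib]

lemma dot_sum_smul_left (r : ι → Fin n → ℝ) (μ : ι → ℝ) (x : Fin n → ℝ) :
    dot (∑ l, μ l • r l) x = ∑ l, μ l * dot (r l) x := by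
  simp only [dot, Finset.sum_apply, Pi.smul_apply, smul_eq_mul, Finset.sum_mul, Finset.mul_sum,
    mul_assoc]
  exact Finset.sum_comm

lemma dot_sum_smul_sub_dual [DecidableEq ι] {r rstar : ι → Fin n → ℝ}
    (hdual : ∀ l j, dot (r l) (rstar j) = if l = j then 1 else 0) (μ : ι → ℝ) (i j : ι) :
    dot (∑ l, μ l • r l) (rstar i - rstar j) = μ i - μ j := by
  simp [dot_sub_right, dot_sum_smul_left, hdual]

lemma IsIntegral.sub {x y : Fin n → ℝ} (hx : IsIntegral x) (hy : IsIntegral y) :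
    IsIntegral (x - y) := fun a => by
  obtain ⟨z, hz⟩ := hx a
  obtain ⟨w, hw⟩ := hy a
  exact ⟨z - w, by simp [hz, hw]⟩

lemma isIntegral_sum_intCast_smul {r : ι → Fin n → ℝ} (hint : ∀ l, IsIntegral (r l))
    (c : ι → ℤ) : IsIntegral (∑ l, (c l : ℝ) • r l) := fun a => by
  choose z hz using fun l => hint l a
  exact ⟨∑ l, c l * z l, by simp [hz]⟩

lemma isIntegral_sum_fract_smul {r : ι → Fin n → ℝ} (hint : ∀ l, IsIntegral (r l))
    {μ : ι → ℝ} (hμ : IsIntegral (∑ l, μ l • r l)) :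
    IsIntegral (∑ l, Int.fract (μ l) • r l) := by
  have hsplit : ∑ l, Int.fract (μ l) • r l = ∑ l, μ l • r l - ∑ l, (⌊μ l⌋ : ℝ) • r l := by
    simp only [Int.fract, sub_smul, Finset.sum_sub_distrib]
  rw [hsplit]
  exact hμ.sub (isIntegral_sum_intCast_smul hint _)

end

lemma span_range_le_span_latticeOf {n : ℕ} {ι : Type} [Fintype ι] {r : ι → Fin n → ℝ}
    (hint : ∀ l, IsIntegral (r l)) :
    Submodule.span ℝ (Set.range r) ≤ Submodule.span ℝ (latticeOf r) := by
  rw [Submodule.span_le]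
  rintro _ ⟨l, rfl⟩
  exact Submodule.subset_span ⟨Submodule.subset_span ⟨l, rfl⟩, hint l⟩

theorem stmt_3_general {n k : ℕ} (r : Fin k → (Fin n → ℝ))
    (hint : ∀ i, IsIntegral (r i))
    (rstar : Fin k → (Fin n → ℝ))
    (hspan : ∀ j, rstar j ∈ Submodule.span ℝ (Set.range r))
    (hdual : ∀ l j, dot (r l) (rstar j) = if l = j then 1 else 0)
    (i j : Fin k) :
    rstar i - rstar j ∈ dualLattice (latticeOf r) ↔
      ∀ lam : Fin k → ℝ, (∀ l, 0 ≤ lam l ∧ lam l < 1) →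
        IsIntegral (∑ l, lam l • r l) → lam i = lam j := by
  constructor
  · rintro ⟨-, hdualInt⟩ lam hlam hlamInt
    have hmem : ∑ l, lam l • r l ∈ latticeOf r :=
      ⟨(Submodule.mem_span_range_iff_exists_fun ℝ).mpr ⟨lam, rfl⟩, hlamInt⟩
    obtain ⟨m, hm⟩ := hdualInt _ hmem
    rw [dot_sum_smul_sub_dual hdual] at hm
    have hfract := Int.fract_eq_fract.mpr ⟨m, hm⟩
    rwa [Int.fract_eq_self.mpr (hlam i), Int.fract_eq_self.mpr (hlam j)] at hfract
  · intro hpar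
    refine ⟨sub_mem (span_range_le_span_latticeOf hint (hspan i))
      (span_range_le_span_latticeOf hint (hspan j)), ?_⟩
    rintro y ⟨hy, hyInt⟩
    obtain ⟨μ, rfl⟩ := (Submodule.mem_span_range_iff_exists_fun ℝ).mp hy
    rw [dot_sum_smul_sub_dual hdual]
    exact Int.fract_eq_fract.mp <| hpar _ (fun l => ⟨Int.fract_nonneg _, Int.fract_lt_one _⟩)
      (isIntegral_sum_fract_smul hint hyInt)

/-- `(r^i)* − (r^j)*` lies in the dual lattice `(L ∩ ℤ^n)*` iff every
integer point of the half-open parallelepiped has equal `i`-th and `j`-th coefficients. -/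
theorem stmt_3 {n k : ℕ} (r : Fin k → (Fin n → ℝ))
    (hint : ∀ i, IsIntegral (r i)) (hli : LinearIndependent ℝ r)
    (rstar : Fin k → (Fin n → ℝ))
    (hspan : ∀ j, rstar j ∈ Submodule.span ℝ (Set.range r))
    (hdual : ∀ l j, dot (r l) (rstar j) = if l = j then 1 else 0)
    (i j : Fin k) (hij : i ≠ j) :
    rstar i - rstar j ∈ dualLattice (latticeOf r) ↔
      ∀ lam : Fin k → ℝ, (∀ l, 0 ≤ lam l ∧ lam l < 1) →
        IsIntegral (∑ l, lam l • r l) → lam i = lam j :=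
  stmt_3_general r hint rstar hspan hdual i j

end ICRPaper
end
end

section
/- Let r^1,...,r^k ∈ Z^n be linearly independent, L = span{r^1,...,r^k}, and M = (r^i)^⊥. Then the orthogonal projection of par{r^1,...,r^k} onto M equals the set of lattice points of (L ∩ Z^n)|M lying in the half-open parallelepiped {Σ_{j≠i} λ_j (r^j|M) : λ_j ∈ [0,1)}. -/
/-!
Projecting onto `(r i)ᗮ` kills `r i`, so a point `∑ λⱼ rⱼ` of the parallelepiped projects
onto `∑_{j ≠ i} λⱼ (rⱼ|M)`. Conversely, if an integral `z ∈ L` projects onto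
`∑_{j ≠ i} λⱼ (rⱼ|M)`, then `z = ∑_{j ≠ i} λⱼ rⱼ + t rᵢ` for some real `t`, and the integral
point `z - ⌊t⌋ rᵢ = ∑_{j ≠ i} λⱼ rⱼ + fract(t) rᵢ` of the parallelepiped has the same projection.
-/

open scoped BigOperators

noncomputable section

namespace ICRPaper

section Parallelepiped

variable {ι V : Type*} [Fintype ι] [DecidableEq ι] [AddCommGroup V] [Module ℝ V]

lemma map_sum_smul_eq_sum_subtype_ne {W : Type*} [AddCommGroup W] [Module ℝ W]
    (f : V →ₗ[ℝ] W) {r : ι → V} {i : ι} (hi : f (r i) = 0) (c : ι → ℝ) :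
    f (∑ j, c j • r j) = ∑ j : {j // j ≠ i}, c j • f (r j) := by
  simp [Fintype.sum_eq_add_sum_subtype_ne _ i, hi]

lemma exists_sub_floor_smul_eq_sum (r : ι → V) (i : ι) {lam : {j // j ≠ i} → ℝ}
    (hlam : ∀ j, 0 ≤ lam j ∧ lam j < 1) (t : ℝ) :
    ∃ c : ι → ℝ, (∀ j, 0 ≤ c j ∧ c j < 1) ∧
      (∑ j, lam j • r j + t • r i) - (⌊t⌋ : ℝ) • r i = ∑ j, c j • r j := by
  refine ⟨fun j => if h : j = i then Int.fract t else lam ⟨j, h⟩, fun j => ?_, ?_⟩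
  · by_cases h : j = i
    · simp [h, Int.fract_nonneg, Int.fract_lt_one]
    · simpa [h] using hlam ⟨j, h⟩
  · have hne (j : {j // j ≠ i}) : (if h : (j : ι) = i then Int.fract t else lam ⟨j, h⟩) = lam j :=
      dif_neg j.2
    rw [Fintype.sum_eq_add_sum_subtype_ne _ i]
    simp only [dif_pos, hne]
    rw [Int.fract, sub_smul]
    abel

end Parallelepiped

lemma IsIntegral.sub_intCast_smul {n : ℕ} {x v : Fin n → ℝ} (hx : IsIntegral x)
    (hv : IsIntegral v) (m : ℤ) : IsIntegral (x - (m : ℝ) • v) := fun c => by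
  obtain ⟨a, ha⟩ := hx c
  obtain ⟨b, hb⟩ := hv c
  exact ⟨a - m * b, by simp [ha, hb]⟩

section Projection

variable {n : ℕ}

lemma dot_eq_dotProduct (x y : Fin n → ℝ) : dot x y = x ⬝ᵥ y := rfl

def projPerpₗ (v : Fin n → ℝ) : (Fin n → ℝ) →ₗ[ℝ] (Fin n → ℝ) where
  toFun := projPerp v
  map_add' a b := by
    simp only [projPerp, dot_eq_dotProduct, add_dotProduct, add_div, add_smul]
    abel
  map_smul' t a := by
    simp only [projPerp, dot_eq_dotProduct, smul_dotProduct, smul_eq_mul, mul_div_assoc,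
      mul_smul, RingHom.id_apply, smul_sub]

@[simp] lemma projPerpₗ_apply (v x : Fin n → ℝ) : projPerpₗ v x = projPerp v x := rfl

@[simp] lemma projPerp_self (v : Fin n → ℝ) : projPerp v v = 0 := by
  by_cases hv : v = 0
  · simp [hv, projPerp]
  · have : dot v v ≠ 0 := by rwa [dot_eq_dotProduct, Ne, dotProduct_self_eq_zero]
    simp [projPerp, div_self this]

lemma exists_eq_add_smul_of_projPerp_eq {v x y : Fin n → ℝ}
    (h : projPerp v x = projPerp v y) : ∃ t : ℝ, x = y + t • v := by
  have hxy : projPerp v (x - y) = 0 := by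
    rw [← projPerpₗ_apply, map_sub, projPerpₗ_apply, projPerpₗ_apply, h, sub_self]
  rw [projPerp, sub_eq_zero] at hxy
  exact ⟨_, eq_add_of_sub_eq' hxy⟩

end Projection

theorem stmt_5_general {n k : ℕ} (r : Fin k → (Fin n → ℝ))
    (hint : ∀ i, IsIntegral (r i)) (i : Fin k) :
    projPerp (r i) '' par r
      = parL (projPerp (r i) '' latticeOf r)
          (fun j : {j : Fin k // j ≠ i} => projPerp (r i) (r (j : Fin k))) := by
  have hproj (c : Fin k → ℝ) :
      projPerp (r i) (∑ j, c j • r j) = ∑ j : {j // j ≠ i}, c j • projPerp (r i) (r j) :=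
    map_sum_smul_eq_sum_subtype_ne (projPerpₗ (r i)) (projPerp_self (r i)) c
  ext y
  constructor
  · rintro ⟨x, ⟨⟨c, hc, rfl⟩, hxint⟩, rfl⟩
    refine ⟨⟨fun j => c j, fun j => hc j, hproj c⟩, _, ⟨?_, hxint⟩, rfl⟩
    exact (Submodule.mem_span_range_iff_exists_fun ℝ).2 ⟨c, rfl⟩
  · rintro ⟨⟨lam, hlam, rfl⟩, z, ⟨-, hzint⟩, hz⟩
    obtain ⟨t, rfl⟩ : ∃ t : ℝ, z = ∑ j, lam j • r j + t • r i := by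
      refine exists_eq_add_smul_of_projPerp_eq (hz.trans ?_)
      simp only [← projPerpₗ_apply, map_sum, map_smul]
    obtain ⟨c, hc, hzc⟩ := exists_sub_floor_smul_eq_sum r i hlam t
    refine ⟨_, ⟨⟨c, hc, hzc⟩, hzint.sub_intCast_smul (hint i) ⌊t⌋⟩, ?_⟩
    rw [← projPerpₗ_apply, map_sub, map_smul, projPerpₗ_apply, projPerpₗ_apply, projPerp_self,
      smul_zero, sub_zero, hz]

/-- the orthogonal projection of `par r` onto `(r^i)^⊥` equals the set
of points of the projected lattice `(L ∩ ℤ^n)|(r^i)^⊥` in the half-open parallelepiped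
spanned by the projected generators. -/
theorem stmt_5 {n k : ℕ} (r : Fin k → (Fin n → ℝ))
    (hint : ∀ i, IsIntegral (r i)) (hli : LinearIndependent ℝ r) (i : Fin k) :
    projPerp (r i) '' par r
      = parL (projPerp (r i) '' latticeOf r)
          (fun j : {j : Fin k // j ≠ i} => projPerp (r i) (r (j : Fin k))) :=
  stmt_5_general r hint i

end ICRPaper
end
end

section
/- Let R = (r^1,...,r^n) ∈ Z^{n×n} be invertible, let Λ = R^{−1}Z^n, and suppose λ ∈ R^n_{>0} satisfies λ + (R^n_{≥0} ∩ Λ) = int(R^n_{≥0}) ∩ Λ. Then for every k ∈ [n], λ_k = min{ μ_k : μ ∈ R^n_{≥0} ∩ Λ, μ_k ≠ 0 }. -/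
/-!
Translating `0` shows that `λ` itself is a lattice point of the open orthant. Conversely, if
`μ ≥ 0` is a lattice point with `μ_k > 0`, adding `e` with `e_k = 0` and `e_i = 1` otherwise
(a lattice point, as `R` is integral) gives a lattice point of the open orthant, hence `μ + e = λ + x` with `x ≥ 0`;
reading off the `k`-th coordinate gives `λ_k ≤ μ_k`.
-/

open scoped BigOperators

noncomputable section

namespace ICRPaper

theorem isIntegral_intCast {n : ℕ} (z : Fin n → ℤ) : IsIntegral (fun i => (z i : ℝ)) :=
  fun i => ⟨z i, rfl⟩

theorem IsIntegral.add {n : ℕ} {x y : Fin n → ℝ} (hx : IsIntegral x) (hy : IsIntegral y) :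
    IsIntegral (x + y) := by
  intro i
  obtain ⟨a, ha⟩ := hx i
  obtain ⟨b, hb⟩ := hy i
  exact ⟨a + b, by simp [ha, hb]⟩

theorem IsIntegral.mulVec {m n : ℕ} {R : Matrix (Fin m) (Fin n) ℝ}
    (hR : ∀ i j, ∃ z : ℤ, R i j = (z : ℝ)) {x : Fin n → ℝ} (hx : IsIntegral x) :
    IsIntegral (R.mulVec x) := by
  choose zR hzR using hR
  choose zx hzx using hx
  intro i
  refine ⟨∑ j, zR i j * zx j, ?_⟩
  simp only [Matrix.mulVec, dotProduct, hzR, hzx]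
  push_cast
  rfl

section OrthantTranslate

variable {n : ℕ} {L : Set (Fin n → ℝ)} {lam : Fin n → ℝ}

theorem pos_and_mem_of_image_add_eq (h0 : (0 : Fin n → ℝ) ∈ L)
    (htrans : (fun x => lam + x) '' {x | (∀ i, 0 ≤ x i) ∧ x ∈ L}
      = {x | (∀ i, 0 < x i) ∧ x ∈ L}) :
    (∀ i, 0 < lam i) ∧ lam ∈ L := by
  have hlam : lam ∈ (fun x => lam + x) '' {x | (∀ i, 0 ≤ x i) ∧ x ∈ L} :=
    ⟨0, ⟨fun _ => le_rfl, h0⟩, add_zero lam⟩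
  rwa [htrans] at hlam

theorem le_of_image_add_eq (hadd : ∀ x ∈ L, ∀ y ∈ L, x + y ∈ L)
    (hL : ∀ k, (fun i => if i = k then (0 : ℝ) else 1) ∈ L)
    (htrans : (fun x => lam + x) '' {x | (∀ i, 0 ≤ x i) ∧ x ∈ L}
      = {x | (∀ i, 0 < x i) ∧ x ∈ L})
    {mu : Fin n → ℝ} (hmu0 : ∀ i, 0 ≤ mu i) (hmuL : mu ∈ L) {k : Fin n} (hmuk : mu k ≠ 0) :
    lam k ≤ mu k := by
  set e : Fin n → ℝ := fun i => if i = k then 0 else 1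
  have hpos : ∀ i, 0 < (mu + e) i := by
    intro i
    by_cases h : i = k
    · subst h
      simpa [e] using lt_of_le_of_ne (hmu0 i) (Ne.symm hmuk)
    · simpa [e, h] using add_pos_of_nonneg_of_pos (hmu0 i) one_pos
  have hmem : mu + e ∈ {x | (∀ i, 0 < x i) ∧ x ∈ L} := ⟨hpos, hadd _ hmuL _ (hL k)⟩
  rw [← htrans] at hmem
  obtain ⟨x, ⟨hx0, -⟩, hxe⟩ := hmem
  have hk : lam k + x k = mu k := by simpa [e] using congrFun hxe k
  linarith [hx0 k]

end OrthantTranslate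

theorem stmt_16_general {n : ℕ} (R : Matrix (Fin n) (Fin n) ℝ)
    (hint : ∀ i j, ∃ z : ℤ, R i j = (z : ℝ))
    (lam : Fin n → ℝ)
    (htrans : (fun x => lam + x) ''
        {x : Fin n → ℝ | (∀ i, 0 ≤ x i) ∧ IsIntegral (R.mulVec x)}
      = {x : Fin n → ℝ | (∀ i, 0 < x i) ∧ IsIntegral (R.mulVec x)}) :
    ∀ k : Fin n, IsLeast
      {t : ℝ | ∃ mu : Fin n → ℝ, (∀ i, 0 ≤ mu i) ∧ IsIntegral (R.mulVec mu) ∧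
        mu k ≠ 0 ∧ t = mu k} (lam k) := by
  set L : Set (Fin n → ℝ) := {x | IsIntegral (R.mulVec x)}
  have h0 : (0 : Fin n → ℝ) ∈ L := fun i => ⟨0, by simp⟩
  have hadd : ∀ x ∈ L, ∀ y ∈ L, x + y ∈ L := fun x hx y hy => by
    simpa only [L, Set.mem_ofPred_eq, Matrix.mulVec_add] using hx.add hy
  have hL : ∀ k, (fun i => if i = k then (0 : ℝ) else 1) ∈ L := fun k =>
    IsIntegral.mulVec hint (by
      simpa using isIntegral_intCast (fun i => if i = k then (0 : ℤ) else 1))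
  obtain ⟨hpos, hlamL⟩ := pos_and_mem_of_image_add_eq h0 htrans
  intro k
  refine ⟨⟨lam, fun i => (hpos i).le, hlamL, (hpos k).ne', rfl⟩, ?_⟩
  rintro _ ⟨mu, hmu0, hmuL, hmuk, rfl⟩
  exact le_of_image_add_eq hadd hL htrans hmu0 hmuL hmuk

/-- if `λ > 0` translates the lattice points of the non-negative orthant
exactly onto the lattice points of the open orthant, where the lattice is `Λ = R⁻¹ℤ^n`,
then each `λ_k` is the minimum of `μ_k` over lattice points `μ ≥ 0` with `μ_k ≠ 0`. -/
theorem stmt_16 {n : ℕ} (R : Matrix (Fin n) (Fin n) ℝ)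
    (hint : ∀ i j, ∃ z : ℤ, R i j = (z : ℝ)) (hdet : R.det ≠ 0)
    (lam : Fin n → ℝ) (hlam : ∀ i, 0 < lam i)
    (htrans : (fun x => lam + x) ''
        {x : Fin n → ℝ | (∀ i, 0 ≤ x i) ∧ IsIntegral (R.mulVec x)}
      = {x : Fin n → ℝ | (∀ i, 0 < x i) ∧ IsIntegral (R.mulVec x)}) :
    ∀ k : Fin n, IsLeast
      {t : ℝ | ∃ mu : Fin n → ℝ, (∀ i, 0 ≤ mu i) ∧ IsIntegral (R.mulVec mu) ∧
        mu k ≠ 0 ∧ t = mu k} (lam k) :=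
  stmt_16_general R hint lam htrans

end ICRPaper
end
end

section
/- Let p, q be distinct primes and k ∈ {1,...,q−1}, l ∈ {1,...,p−1} with kp + lq = pq − 1. Define the matrix R with columns (1,0,0,0), (0,1,0,0), (l,l,p,0), (k,k,0,q). Then det R = pq, the vector y = R·(1/(pq), 1/(pq), 1/p, 1/q)^T is integral, and y + RZ^4 generates the cyclic quotient group Z^4 / RZ^4. -/
open scoped BigOperators

noncomputable section

namespace ICRPaper

/-- The matrix `R` with columns `(1,0,0,0), (0,1,0,0), (l,l,p,0), (k,k,0,q)`. -/
def Rmat (p q k l : ℕ) : Matrix (Fin 4) (Fin 4) ℤ :=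
  !![1, 0, (l : ℤ), (k : ℤ);
     0, 1, (l : ℤ), (k : ℤ);
     0, 0, (p : ℤ), 0;
     0, 0, 0, (q : ℤ)]

/-! The hypothesis `k p + l q + 1 = p q` is used twice. Divided by `p q` it says that
`R (1/(pq), 1/(pq), 1/p, 1/q)ᵀ = (1,1,1,1)`; read as the Bézout identity `(q - k) p - l q = 1` it
lets the Chinese remainder theorem shift any `x ∈ ℤ⁴` by a multiple of `(1,1,1,1)` so that
`p ∣ x₂` and `q ∣ x₃`. Since the first two columns of `R` are unit vectors, the shifted vector
then lies in `Rℤ⁴`, so `(1,1,1,1)` generates `ℤ⁴ / Rℤ⁴`. -/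

theorem Rmat_det (p q k l : ℕ) : (Rmat p q k l).det = (p * q : ℤ) := by
  simp [Rmat, Matrix.det_succ_row_zero, Fin.sum_univ_succ]

theorem Rmat_map_mulVec {R : Type*} [CommRing R] (p q k l : ℕ) (z : Fin 4 → R) :
    ((Rmat p q k l).map (Int.cast : ℤ → R)).mulVec z =
      ![z 0 + l * z 2 + k * z 3, z 1 + l * z 2 + k * z 3, p * z 2, q * z 3] := by
  ext i
  fin_cases i <;> simp [Rmat, Matrix.mulVec, dotProduct, Fin.sum_univ_four]

theorem Rmat_mulVec (p q k l : ℕ) (z : Fin 4 → ℤ) :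
    (Rmat p q k l).mulVec z =
      ![z 0 + l * z 2 + k * z 3, z 1 + l * z 2 + k * z 3, p * z 2, q * z 3] := by
  have h := Rmat_map_mulVec p q k l z
  rwa [show (Int.cast : ℤ → ℤ) = id from funext fun _ => Int.cast_id, Matrix.map_id] at h

theorem Rmat_mulVec_eq_one {p q k l : ℕ} (hp : p ≠ 0) (hq : q ≠ 0)
    (hkl : k * p + l * q + 1 = p * q) :
    ((Rmat p q k l).map (Int.cast : ℤ → ℝ)).mulVec
      ![1 / ((p : ℝ) * q), 1 / ((p : ℝ) * q), 1 / (p : ℝ), 1 / (q : ℝ)] = 1 := by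
  have hkl' : (k : ℝ) * p + l * q + 1 = p * q := by exact_mod_cast hkl
  have hp' : (p : ℝ) ≠ 0 := by exact_mod_cast hp
  have hq' : (q : ℝ) ≠ 0 := by exact_mod_cast hq
  rw [Rmat_map_mulVec]
  ext i
  fin_cases i <;>
    simp only [Fin.zero_eta, Fin.mk_one, Fin.reduceFinMk, Fin.isValue, Matrix.cons_val_zero,
      Matrix.cons_val, Matrix.cons_val_one, Pi.one_apply] <;>
    field_simp <;> linear_combination hkl'

/-- The multiplier `a p x₃ + b q x₂` is `≡ x₂ [ZMOD p]` and `≡ x₃ [ZMOD q]`. -/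
theorem Rmat_mulVec_eq_sub_smul_one (p q k l : ℕ) {a b : ℤ} (hab : a * p + b * q = 1)
    (x : Fin 4 → ℤ) :
    (Rmat p q k l).mulVec
        ![x 0 - (a * p * x 3 + b * q * x 2) - l * (a * (x 2 - x 3)) - k * (b * (x 3 - x 2)),
          x 1 - (a * p * x 3 + b * q * x 2) - l * (a * (x 2 - x 3)) - k * (b * (x 3 - x 2)),
          a * (x 2 - x 3), b * (x 3 - x 2)] =
      x - (a * p * x 3 + b * q * x 2) • 1 := by
  rw [Rmat_mulVec]
  ext i
  fin_cases i <;>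
    simp only [Fin.zero_eta, Fin.mk_one, Fin.reduceFinMk, Fin.isValue, Matrix.cons_val_zero,
      Matrix.cons_val, Matrix.cons_val_one, Pi.sub_apply, Pi.smul_apply, Pi.one_apply,
      smul_eq_mul, mul_one]
  · ring
  · ring
  · linear_combination x 2 * hab
  · linear_combination x 3 * hab

theorem Rmat_exists_sub_smul_one_mem_range (p q k l : ℕ) {a b : ℤ} (hab : a * p + b * q = 1)
    (x : Fin 4 → ℤ) :
    ∃ m : ℤ, x - m • 1 ∈ LinearMap.range (Matrix.mulVecLin (Rmat p q k l)) :=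
  ⟨_, _, Rmat_mulVec_eq_sub_smul_one p q k l hab x⟩

theorem isAddCyclic_quotient_of_forall_sub_smul_mem {M : Type*} [AddCommGroup M]
    {N : Submodule ℤ M} (y : M) (h : ∀ x, ∃ m : ℤ, x - m • y ∈ N) : IsAddCyclic (M ⧸ N) := by
  refine ⟨⟨Submodule.Quotient.mk y, fun x => ?_⟩⟩
  obtain ⟨x, rfl⟩ := Submodule.Quotient.mk_surjective _ x
  obtain ⟨m, hm⟩ := h x
  exact ⟨m, (Submodule.Quotient.mk_smul N m y).symm.trans ((Submodule.Quotient.eq N).mpr hm).symm⟩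

theorem stmt_19_general (p q : ℕ) (hp : p.Prime) (hq : q.Prime) (k l : ℕ)
    (hkl : k * p + l * q = p * q - 1) :
    (Rmat p q k l).det = (p * q : ℤ) ∧
    ∃ yz : Fin 4 → ℤ,
      (∀ i, (yz i : ℝ) =
        (((Rmat p q k l).map (Int.cast : ℤ → ℝ)).mulVec
          ![1 / ((p : ℝ) * q), 1 / ((p : ℝ) * q), 1 / (p : ℝ), 1 / (q : ℝ)]) i) ∧
      (IsAddCyclic ((Fin 4 → ℤ) ⧸ LinearMap.range (Matrix.mulVecLin (Rmat p q k l)))) ∧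
      ∀ x : Fin 4 → ℤ, ∃ m : ℤ,
        x - m • yz ∈ LinearMap.range (Matrix.mulVecLin (Rmat p q k l)) := by
  -- `0 < p * q` undoes the truncated subtraction in `hkl`
  have hkl' : k * p + l * q + 1 = p * q := by
    have := Nat.mul_pos hp.pos hq.pos
    omega
  have bezout : ((q : ℤ) - k) * p + (-l : ℤ) * q = 1 := by
    have : (k : ℤ) * p + l * q + 1 = p * q := by exact_mod_cast hkl'
    linear_combination -this
  have hgen := Rmat_exists_sub_smul_one_mem_range p q k l bezout
  refine ⟨Rmat_det p q k l, 1, fun i => ?_, isAddCyclic_quotient_of_forall_sub_smul_mem 1 hgen, hgen⟩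
  rw [Rmat_mulVec_eq_one hp.ne_zero hq.ne_zero hkl']
  simp

/-- for distinct primes `p, q` and `k, l` with `kp + lq = pq − 1`,
the matrix `R` has `det R = pq`, the vector `y = R·(1/(pq), 1/(pq), 1/p, 1/q)ᵀ` is
integral, and `y + Rℤ^4` generates the cyclic quotient group `ℤ^4 / Rℤ^4`. -/
theorem stmt_19 (p q : ℕ) (hp : p.Prime) (hq : q.Prime) (hpq : p ≠ q)
    (k l : ℕ) (hk1 : 1 ≤ k) (hk2 : k ≤ q - 1) (hl1 : 1 ≤ l) (hl2 : l ≤ p - 1)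
    (hkl : k * p + l * q = p * q - 1) :
    (Rmat p q k l).det = (p * q : ℤ) ∧
    ∃ yz : Fin 4 → ℤ,
      (∀ i, (yz i : ℝ) =
        (((Rmat p q k l).map (Int.cast : ℤ → ℝ)).mulVec
          ![1 / ((p : ℝ) * q), 1 / ((p : ℝ) * q), 1 / (p : ℝ), 1 / (q : ℝ)]) i) ∧
      (IsAddCyclic ((Fin 4 → ℤ) ⧸ LinearMap.range (Matrix.mulVecLin (Rmat p q k l)))) ∧
      ∀ x : Fin 4 → ℤ, ∃ m : ℤ,
        x - m • yz ∈ LinearMap.range (Matrix.mulVecLin (Rmat p q k l)) :=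
  stmt_19_general p q hp hq k l hkl

end ICRPaper
end
end
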